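/- Let (u, λ) be a solution pair of the nonlocal problem (1.1), set β = (‖u'‖₂² + ‖u‖_{p+1}^{p+1})^q and h = β^{1/(p-1)}. Then (h^{-1}·u, λ/β) is a solution pair of the local problem (1.2), and h satisfies the scalar equation h^{(p-1-2q)/q} = ‖(h^{-1}·u)'‖₂² + h^{p-1}·‖h^{-1}·u‖_{p+1}^{p+1}. -/

import Mathlib

open Real Filter Asymptotics Set

/-- `‖u'‖₂² = ∫₀¹ u'(x)² dx`. -/
noncomputable def gradSq (u : ℝ → ℝ) : ℝ := ∫ x in (0:ℝ)..1, (deriv u x) ^ 2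

/-- `‖u‖_{p+1}^{p+1} = ∫₀¹ u(x)^{p+1} dx`. -/
noncomputable def pNorm (p : ℝ) (u : ℝ → ℝ) : ℝ := ∫ x in (0:ℝ)..1, (u x) ^ (p + 1)

/-- `‖u‖₂ = (∫₀¹ u(x)² dx)^{1/2}`. -/
noncomputable def l2norm (u : ℝ → ℝ) : ℝ := (∫ x in (0:ℝ)..1, (u x) ^ 2) ^ ((1:ℝ)/2)

/-- The constant `C₁`. -/
noncomputable def C1 (p : ℝ) : ℝ :=
  (p + 3) * ∫ s in (0:ℝ)..1, Real.sqrt ((p-1)/(p+1) - s ^ 2 + (2/(p+1)) * s ^ (p+1))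

/-- Solution pair of the nonlocal problem (1.1). -/
def IsNonlocalSol (p q : ℝ) (u : ℝ → ℝ) (lam : ℝ) : Prop :=
  ContDiffOn ℝ 2 u (Icc 0 1) ∧
  (∀ x ∈ Ioo (0:ℝ) 1, 0 < u x) ∧
  u 0 = 0 ∧ u 1 = 0 ∧
  ∀ x ∈ Ioo (0:ℝ) 1,
    -((gradSq u + pNorm p u) ^ q) * deriv (deriv u) x + (u x) ^ p = lam * u x

/-- Solution pair of the local problem (1.2). -/
def IsLocalSol (p : ℝ) (w : ℝ → ℝ) (γ : ℝ) : Prop :=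
  ContDiffOn ℝ 2 w (Icc 0 1) ∧
  (∀ x ∈ Ioo (0:ℝ) 1, 0 < w x) ∧
  w 0 = 0 ∧ w 1 = 0 ∧
  ∀ x ∈ Ioo (0:ℝ) 1, -deriv (deriv w) x + (w x) ^ p = γ * w x

/-!
Dividing `u` by `h` turns the nonlocal coefficient `β = h ^ (p - 1)` into `1`: the term `u ^ p`
scales by `h ^ (-p)` while `u''` and `u` scale by `h⁻¹`. Both energies scale homogeneously,
`‖(h⁻¹ u)'‖₂² = h⁻² ‖u'‖₂²` and `‖h⁻¹ u‖_{p+1}^{p+1} = h^{-(p+1)} ‖u‖_{p+1}^{p+1}`, so the right-hand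
side of the scalar equation is `h⁻² (‖u'‖₂² + ‖u‖_{p+1}^{p+1}) = h⁻² β ^ (1/q) = h ^ ((p - 1)/q - 2)`.
-/

open intervalIntegral

lemma gradSq_const_mul (c : ℝ) (u : ℝ → ℝ) :
    gradSq (fun x => c * u x) = c ^ 2 * gradSq u := by
  simp only [gradSq, deriv_const_mul_field', mul_pow, integral_const_mul]

lemma pNorm_const_mul {c : ℝ} (hc : 0 ≤ c) (p : ℝ) {u : ℝ → ℝ}
    (hu : ∀ x ∈ Icc (0:ℝ) 1, 0 ≤ u x) :
    pNorm p (fun x => c * u x) = c ^ (p + 1) * pNorm p u := by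
  rw [pNorm, pNorm, ← integral_const_mul]
  refine integral_congr fun x hx => ?_
  rw [uIcc_of_le zero_le_one] at hx
  exact mul_rpow hc (hu x hx)

lemma rpow_mul_inv_rpow_add_two {h : ℝ} (hh : 0 < h) (a : ℝ) :
    h ^ a * h⁻¹ ^ (a + 2) = h⁻¹ ^ 2 := by
  rw [inv_rpow hh.le, rpow_add hh, rpow_two, mul_inv, ← mul_assoc,
    mul_inv_cancel₀ (rpow_pos_of_pos hh a).ne', one_mul, inv_pow]

namespace IsNonlocalSol

variable {p q lam : ℝ} {u : ℝ → ℝ}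

lemma nonneg (hu : IsNonlocalSol p q u lam) : ∀ x ∈ Icc (0:ℝ) 1, 0 ≤ u x := by
  obtain ⟨-, hpos, h0, h1, -⟩ := hu
  intro x ⟨hx0, hx1⟩
  rcases hx0.eq_or_lt with rfl | hx0
  · exact h0.ge
  rcases hx1.eq_or_lt with rfl | hx1
  · exact h1.ge
  exact (hpos x ⟨hx0, hx1⟩).le

lemma pNorm_pos (hu : IsNonlocalSol p q u lam) (hp : 0 ≤ p + 1) : 0 < pNorm p u := by
  refine intervalIntegral_pos_of_pos_on ?_ (fun x hx => rpow_pos_of_pos (hu.2.1 x hx) _)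
    zero_lt_one
  refine ContinuousOn.intervalIntegrable ?_
  rw [uIcc_of_le zero_le_one]
  exact hu.1.continuousOn.rpow_const fun _ _ => Or.inr hp

lemma energy_pos (hu : IsNonlocalSol p q u lam) (hp : 0 ≤ p + 1) :
    0 < gradSq u + pNorm p u :=
  add_pos_of_nonneg_of_pos (integral_nonneg zero_le_one fun _ _ => sq_nonneg _)
    (hu.pNorm_pos hp)

lemma isLocalSol_inv_mul (hu : IsNonlocalSol p q u lam) {h : ℝ} (hh : 0 < h)
    (hhβ : h ^ (p - 1) = (gradSq u + pNorm p u) ^ q) :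
    IsLocalSol p (fun x => h⁻¹ * u x) (lam / (gradSq u + pNorm p u) ^ q) := by
  obtain ⟨hreg, hpos, h0, h1, heq⟩ := hu
  refine ⟨contDiffOn_const.mul hreg, fun x hx => mul_pos (inv_pos.2 hh) (hpos x hx),
    by simp [h0], by simp [h1], fun x hx => ?_⟩
  have hβ : h ^ p = h * (gradSq u + pNorm p u) ^ q := by
    rw [← hhβ, mul_comm, ← rpow_add_one hh.ne', sub_add_cancel]
  have hβpos : 0 < (gradSq u + pNorm p u) ^ q := hhβ ▸ rpow_pos_of_pos hh _
  simp only [deriv_const_mul_field']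
  rw [mul_rpow (inv_nonneg.2 hh.le) (hpos x hx).le, inv_rpow hh.le, hβ]
  field_simp
  linear_combination heq x hx

end IsNonlocalSol

theorem stmt9_general (p q : ℝ) (hp : 1 < p) (hq0 : 0 < q)
    (u : ℝ → ℝ) (lam : ℝ) (hu : IsNonlocalSol p q u lam)
    (β h : ℝ) (hβ : β = (gradSq u + pNorm p u) ^ q) (hhd : h = β ^ (1/(p-1))) :
    IsLocalSol p (fun x => h⁻¹ * u x) (lam / β) ∧
    h ^ ((p - 1 - 2*q)/q)
      = gradSq (fun x => h⁻¹ * u x) + h ^ (p-1) * pNorm p (fun x => h⁻¹ * u x) := by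
  have hS : 0 < gradSq u + pNorm p u := hu.energy_pos (by linarith)
  have hβpos : 0 < β := hβ ▸ rpow_pos_of_pos hS q
  have hhpos : 0 < h := hhd ▸ rpow_pos_of_pos hβpos _
  have hhβ : h ^ (p - 1) = β := by
    rw [hhd, ← rpow_mul hβpos.le, one_div_mul_cancel (by linarith), rpow_one]
  have hhS : h ^ ((p - 1) / q) = gradSq u + pNorm p u := by
    rw [div_eq_mul_inv, rpow_mul hhpos.le, hhβ, hβ, rpow_rpow_inv hS.le hq0.ne']
  refine ⟨hβ ▸ hu.isLocalSol_inv_mul hhpos (hhβ.trans hβ), ?_⟩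
  rw [gradSq_const_mul, pNorm_const_mul (inv_nonneg.2 hhpos.le) p hu.nonneg, ← mul_assoc,
    show p + 1 = p - 1 + 2 by ring, rpow_mul_inv_rpow_add_two hhpos, ← mul_add, ← hhS,
    show (p - 1 - 2 * q) / q = (p - 1) / q - (2 : ℕ) by field_simp; push_cast; ring,
    rpow_sub_natCast hhpos.ne', div_eq_inv_mul, inv_pow]

theorem stmt9 (p q : ℝ) (hp : 1 < p) (hq0 : 0 < q) (hq1 : q < (p-1)/(p+1))
    (u : ℝ → ℝ) (lam : ℝ) (hlam : 0 < lam) (hu : IsNonlocalSol p q u lam)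
    (β h : ℝ) (hβ : β = (gradSq u + pNorm p u) ^ q) (hhd : h = β ^ (1/(p-1))) :
    IsLocalSol p (fun x => h⁻¹ * u x) (lam / β) ∧
    h ^ ((p - 1 - 2*q)/q)
      = gradSq (fun x => h⁻¹ * u x) + h ^ (p-1) * pNorm p (fun x => h⁻¹ * u x) :=
  stmt9_general p q hp hq0 u lam hu β h hβ hhd
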